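/- arXiv:2404.14384 — 5 statements merged into one kernel-verified Lean document; each statement's English description precedes it below -/
import Mathlib

section
/- (Proposition 1) Any swappable circuit can be turned into an unswappable circuit by repeatedly applying Swap 1–3: for every circuit c (a list of optional MCT gates), there exists a circuit c' reachable from c by finitely many swap steps (the reflexive-transitive closure of the swap-step relation) such that c' is unswappable. -/
/-- An MCT gate on `n` qubits: a target qubit and a set of control qubits
not containing the target. -/
structure MCTGate (n : ℕ) where
  target : Fin n
  controls : Finset (Fin n)
  target_not_mem : target ∉ controls

/-- The action of an MCT gate on an `n`-qubit basis state: if all control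
qubits are `true`, flip the target qubit; otherwise do nothing. -/
def MCTGate.apply {n : ℕ} (g : MCTGate n) (σ : Fin n → Bool) : Fin n → Bool :=
  if ∀ c ∈ g.controls, σ c = true then Function.update σ g.target (!(σ g.target)) else σ

/-- A circuit with possibly empty gates: a list of optional MCT gates. -/
abbrev Circuit (n : ℕ) := List (Option (MCTGate n))

/-- The action of a circuit with possibly empty gates: empty slots act as
the identity, and the nonempty gates are applied in order. -/
def runO {n : ℕ} (c : Circuit n) (σ : Fin n → Bool) : Fin n → Bool :=
  c.foldl (fun s og => og.elim s (fun g => g.apply s)) σ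

/-- A single swap step, applying Swap 1, Swap 2 or Swap 3 at some position. -/
inductive SwapStep {n : ℕ} : Circuit n → Circuit n → Prop
  /-- Swap 1: exchange an empty slot with a following nonempty slot. -/
  | swap1 (pre post : Circuit n) (g : MCTGate n) :
      SwapStep (pre ++ none :: some g :: post) (pre ++ some g :: none :: post)
  /-- Swap 2: exchange adjacent gates `g1, g2` with `g1.target > g2.target`,
  where neither target is a control of the other gate. -/
  | swap2 (pre post : Circuit n) (g1 g2 : MCTGate n)
      (ht : g2.target < g1.target)
      (h1 : g1.target ∉ g2.controls) (h2 : g2.target ∉ g1.controls) :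
      SwapStep (pre ++ some g1 :: some g2 :: post) (pre ++ some g2 :: some g1 :: post)
  /-- Swap 3: exchange adjacent gates with the same target where the first
  has strictly fewer control qubits. -/
  | swap3 (pre post : Circuit n) (g1 g2 : MCTGate n)
      (ht : g1.target = g2.target) (hc : g1.controls.card < g2.controls.card) :
      SwapStep (pre ++ some g1 :: some g2 :: post) (pre ++ some g2 :: some g1 :: post)

/-- A circuit is unswappable if no swap step applies to it. -/
def Unswappable {n : ℕ} (c : Circuit n) : Prop := ¬ ∃ c', SwapStep c c'

/-- A key used to order slots: `none` is biggest; gates are ordered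
by target (major) and reverse control-count (minor). -/
def key {n : ℕ} : Option (MCTGate n) → ℕ
  | none => (n + 1) * (n + 1)
  | some g => (g.target : ℕ) * (n + 1) + (n - g.controls.card)

/-- A position-weighted measure that strictly decreases under swap steps. -/
def nu {n : ℕ} : Circuit n → ℕ
  | [] => 0
  | a :: l => key a * (l.length + 1) + nu l

lemma key_some_lt_none {n : ℕ} (g : MCTGate n) :
    key (some g) < key (none : Option (MCTGate n)) := by
  simp only [key]
  have ht : (g.target : ℕ) < n := g.target.isLt
  have hc : n - g.controls.card ≤ n := Nat.sub_le _ _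
  have h1 : (g.target : ℕ) * (n + 1) + (n + 1) ≤ n * (n + 1) := by
    have := Nat.mul_le_mul_right (n + 1) (Nat.succ_le_of_lt ht)
    simpa [Nat.succ_mul] using this
  nlinarith

lemma card_controls_lt {n : ℕ} (g : MCTGate n) : g.controls.card < n := by
  have hss : g.controls ⊂ Finset.univ :=
    Finset.ssubset_univ_iff.mpr (fun h => g.target_not_mem (h ▸ Finset.mem_univ _))
  have := Finset.card_lt_card hss
  simpa using this

lemma key_swap2 {n : ℕ} (g1 g2 : MCTGate n) (ht : g2.target < g1.target) :
    key (some g2) < key (some g1) := by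
  simp only [key]
  have ht' : (g2.target : ℕ) < (g1.target : ℕ) := ht
  have hm : (g2.target : ℕ) * (n + 1) + (n + 1) ≤ (g1.target : ℕ) * (n + 1) := by
    have := Nat.mul_le_mul_right (n + 1) (Nat.succ_le_of_lt ht')
    simpa [Nat.succ_mul] using this
  have h2 : n - g2.controls.card ≤ n := Nat.sub_le _ _
  linarith

lemma key_swap3 {n : ℕ} (g1 g2 : MCTGate n) (ht : g1.target = g2.target)
    (hc : g1.controls.card < g2.controls.card) :
    key (some g2) < key (some g1) := by
  simp only [key, ← ht]
  have h1 : g1.controls.card < n := card_controls_lt g1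
  exact Nat.add_lt_add_left (by omega) _

lemma nu_swap_pair {n : ℕ} (a b : Option (MCTGate n)) (post : Circuit n)
    (h : key b < key a) : nu (b :: a :: post) < nu (a :: b :: post) := by
  simp only [nu, List.length_cons]
  nlinarith [h]

lemma nu_append_lt {n : ℕ} (pre : Circuit n) {l1 l2 : Circuit n}
    (hlen : l2.length = l1.length) (h : nu l2 < nu l1) :
    nu (pre ++ l2) < nu (pre ++ l1) := by
  induction pre with
  | nil => simpa
  | cons a pre ih =>
    simp only [List.cons_append, nu, List.append_eq]
    rw [List.length_append, List.length_append, hlen]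
    exact Nat.add_lt_add_left ih _

lemma nu_lt_of_swapStep {n : ℕ} {c c' : Circuit n} (h : SwapStep c c') :
    nu c' < nu c := by
  cases h with
  | swap1 pre post g =>
    exact nu_append_lt pre (by simp) (nu_swap_pair _ _ _ (key_some_lt_none g))
  | swap2 pre post g1 g2 ht h1 h2 =>
    exact nu_append_lt pre (by simp) (nu_swap_pair _ _ _ (key_swap2 g1 g2 ht))
  | swap3 pre post g1 g2 ht hc =>
    exact nu_append_lt pre (by simp) (nu_swap_pair _ _ _ (key_swap3 g1 g2 ht hc))

theorem exists_unswappable_of_swaps {n : ℕ} (c : Circuit n) :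
    ∃ c' : Circuit n, Relation.ReflTransGen SwapStep c c' ∧ Unswappable c' := by
  suffices H : ∀ m (c : Circuit n), nu c < m →
      ∃ c' : Circuit n, Relation.ReflTransGen SwapStep c c' ∧ Unswappable c' from
    H (nu c + 1) c (Nat.lt_succ_self _)
  intro m
  induction m with
  | zero => intro c h; omega
  | succ m ih =>
    intro c hc
    by_cases h : Unswappable c
    · exact ⟨c, Relation.ReflTransGen.refl, h⟩
    · rw [Unswappable, not_not] at h
      obtain ⟨c', hstep⟩ := h
      have hlt := nu_lt_of_swapStep hstep
      obtain ⟨c'', h1, h2⟩ := ih c' (by omega)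
      exact ⟨c'', Relation.ReflTransGen.head hstep h1, h2⟩
end

section
/- Each swap operation yields an equivalent circuit: if circuit c' is obtained from circuit c by a single swap step (Swap 1, 2, or 3), then c and c' compute the same function, i.e., for every n-qubit basis state σ the result of applying the nonempty gates of c' in order to σ equals the result of applying the nonempty gates of c in order to σ. -/
lemma MCTGate.apply_ne {n : ℕ} (g : MCTGate n) (σ : Fin n → Bool) {x : Fin n}
    (hx : x ≠ g.target) : g.apply σ x = σ x := by
  unfold MCTGate.apply
  split <;> simp [Function.update_of_ne hx]

lemma MCTGate.cond_apply {n : ℕ} (g1 g2 : MCTGate n) (σ : Fin n → Bool)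
    (h1 : g1.target ∉ g2.controls) :
    (∀ c ∈ g2.controls, g1.apply σ c = true) ↔ (∀ c ∈ g2.controls, σ c = true) := by
  constructor <;> intro h c hc <;>
    have hne : c ≠ g1.target := fun he => h1 (he ▸ hc)
  · rw [← g1.apply_ne σ hne]; exact h c hc
  · rw [g1.apply_ne σ hne]; exact h c hc

lemma MCTGate.apply_comm {n : ℕ} (g1 g2 : MCTGate n)
    (h1 : g1.target ∉ g2.controls) (h2 : g2.target ∉ g1.controls) (σ : Fin n → Bool) :
    g2.apply (g1.apply σ) = g1.apply (g2.apply σ) := by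
  by_cases c1 : ∀ c ∈ g1.controls, σ c = true
  · by_cases c2 : ∀ c ∈ g2.controls, σ c = true
    · have e1 : g1.apply σ = Function.update σ g1.target (!(σ g1.target)) := if_pos c1
      have e2 : g2.apply σ = Function.update σ g2.target (!(σ g2.target)) := if_pos c2
      have c2' : ∀ c ∈ g2.controls, g1.apply σ c = true :=
        (g1.cond_apply g2 σ h1).mpr c2
      have c1' : ∀ c ∈ g1.controls, g2.apply σ c = true :=
        (g2.cond_apply g1 σ h2).mpr c1
      rw [show g2.apply (g1.apply σ) = _ from if_pos c2',
          show g1.apply (g2.apply σ) = _ from if_pos c1', e1, e2]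
      by_cases ht : g1.target = g2.target
      · rw [← ht]
      · have hσ1 : (Function.update σ g1.target (!(σ g1.target))) g2.target = σ g2.target :=
          Function.update_of_ne (Ne.symm ht) _ _
        have hσ2 : (Function.update σ g2.target (!(σ g2.target))) g1.target = σ g1.target :=
          Function.update_of_ne ht _ _
        rw [hσ1, hσ2, Function.update_comm ht]
    · have e2 : g2.apply σ = σ := if_neg c2
      have c2' : ¬ ∀ c ∈ g2.controls, g1.apply σ c = true := by
        rw [g1.cond_apply g2 σ h1]; exact c2
      rw [show g2.apply (g1.apply σ) = _ from if_neg c2', e2]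
  · have e1 : g1.apply σ = σ := if_neg c1
    have c1' : ¬ ∀ c ∈ g1.controls, g2.apply σ c = true := by
      rw [g2.cond_apply g1 σ h2]; exact c1
    rw [show g1.apply (g2.apply σ) = _ from if_neg c1', e1]

lemma runO_append {n : ℕ} (a b : Circuit n) (σ : Fin n → Bool) :
    runO (a ++ b) σ = runO b (runO a σ) := by
  simp [runO, List.foldl_append]

theorem swapStep_preserves_function {n : ℕ} {c c' : Circuit n} (h : SwapStep c c') :
    ∀ σ : Fin n → Bool, runO c' σ = runO c σ := by
  intro σ
  cases h with
  | swap1 pre post g =>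
      rw [runO_append, runO_append]
      simp [runO]
  | swap2 pre post g1 g2 ht h1 h2 =>
      rw [runO_append, runO_append]
      simp only [runO, List.foldl_cons, Option.elim]
      rw [MCTGate.apply_comm g2 g1 h2 h1]
  | swap3 pre post g1 g2 ht hc =>
      have h1 : g1.target ∉ g2.controls := ht ▸ g2.target_not_mem
      have h2 : g2.target ∉ g1.controls := ht ▸ g1.target_not_mem
      rw [runO_append, runO_append]
      simp only [runO, List.foldl_cons, Option.elim]
      rw [MCTGate.apply_comm g2 g1 h2 h1]
end

section
/- Every application of Swap 3 leaves the target vector unchanged and strictly decreases the number of same-target inversions: if circuit c' is obtained from circuit c by a single Swap 3, then τ(c') = τ(c), and the number of pairs of positions i < j such that both slots hold gates with equal targets and the gate at position i has strictly fewer control qubits than the gate at position j is exactly one less in c' than in c. -/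
/-- The target vector of a circuit: each empty slot is replaced by `0` and
each slot holding a gate with target `t` is replaced by `t + 1`. -/
def tau {n : ℕ} (c : Circuit n) : List ℕ :=
  c.map (fun og => og.elim 0 (fun g => (g.target : ℕ) + 1))

open scoped Classical in
/-- The number of pairs of positions `i < j` of `c` whose slots `a` (at `i`)
and `b` (at `j`) satisfy the predicate `P a b`. -/
noncomputable def pairCount {n : ℕ} (P : Option (MCTGate n) → Option (MCTGate n) → Prop)
    (c : Circuit n) : ℕ :=
  ((Finset.range c.length ×ˢ Finset.range c.length).filter
    (fun p => p.1 < p.2 ∧ ∃ a b, (c)[p.1]? = some a ∧ (c)[p.2]? = some b ∧ P a b)).card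

/-- A single application of Swap 3: exchange adjacent gates `g1, g2`
(in this order) with the same target, where `g1` has strictly fewer
control qubits than `g2`. -/
inductive Swap3Step {n : ℕ} : Circuit n → Circuit n → Prop
  | intro (pre post : Circuit n) (g1 g2 : MCTGate n)
      (ht : g1.target = g2.target) (hc : g1.controls.card < g2.controls.card) :
      Swap3Step (pre ++ some g1 :: some g2 :: post) (pre ++ some g2 :: some g1 :: post)

/-!
Swap 3 only exchanges two gates with the same target, so `tau` is unchanged. For the inversions,
peel the circuit from the front: the pairs of `a :: l` are those starting at `a`, counted by
`l.countP (P a)`, plus the pairs of `l`. The first count is invariant under permuting `l`, so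
an adjacent swap changes only the status of the swapped pair itself, which goes from an
inversion (fewer controls first) to a non-inversion.
-/

open Finset

section PairCount

variable {n : ℕ} (P : Option (MCTGate n) → Option (MCTGate n) → Prop)

open scoped Classical

theorem sum_range_length_ite_getElem?_eq_countP {α : Type*} (Q : α → Prop) (l : List α) :
    ∑ j ∈ range l.length, (if ∃ b, l[j]? = some b ∧ Q b then 1 else 0) =
      l.countP (fun b => Q b) := by
  induction l with
  | nil => simp
  | cons a l ih =>
    rw [List.length_cons, sum_range_succ']
    simp [ih, List.countP_cons, add_comm]

theorem pairCount_eq_sum (c : Circuit n) :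
    pairCount P c = ∑ i ∈ range c.length, ∑ j ∈ range c.length,
      if i < j ∧ ∃ a b, (c)[i]? = some a ∧ (c)[j]? = some b ∧ P a b then 1 else 0 := by
  rw [pairCount, card_filter, sum_product]

theorem pairCount_cons (a : Option (MCTGate n)) (l : Circuit n) :
    pairCount P (a :: l) = l.countP (fun b => P a b) + pairCount P l := by
  rw [pairCount_eq_sum, pairCount_eq_sum, List.length_cons, sum_range_succ', add_comm]
  have head : ∑ j ∈ range (l.length + 1),
      (if 0 < j ∧ ∃ x b, (a :: l)[0]? = some x ∧ (a :: l)[j]? = some b ∧ P x b then 1 else 0) =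
      l.countP (fun b => P a b) := by
    rw [← sum_range_length_ite_getElem?_eq_countP, sum_range_succ']
    simp
  have tail : ∀ i ∈ range l.length, ∑ j ∈ range (l.length + 1),
      (if i + 1 < j ∧ ∃ x b, (a :: l)[i + 1]? = some x ∧ (a :: l)[j]? = some b ∧ P x b
        then 1 else 0) =
      ∑ j ∈ range l.length,
        (if i < j ∧ ∃ x b, l[i]? = some x ∧ l[j]? = some b ∧ P x b then 1 else 0) := by
    intro i _
    rw [sum_range_succ']
    simp
  rw [head, sum_congr rfl tail]

theorem pairCount_append_swap (x y : Option (MCTGate n)) (hxy : P x y) (hyx : ¬P y x)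
    (pre post : Circuit n) :
    pairCount P (pre ++ y :: x :: post) + 1 = pairCount P (pre ++ x :: y :: post) := by
  induction pre with
  | nil =>
    simp [pairCount_cons, hxy, hyx]
    omega
  | cons b pre ih =>
    have hperm : (pre ++ y :: x :: post).Perm (pre ++ x :: y :: post) :=
      (List.Perm.swap x y post).append_left pre
    simp only [List.cons_append, pairCount_cons, hperm.countP_eq]
    omega

end PairCount

theorem swap3_preserves_tau_and_decreases_inversions {n : ℕ} {c c' : Circuit n}
    (h : Swap3Step c c') :
    tau c' = tau c ∧
      pairCount (fun a b => ∃ g1 g2, a = some g1 ∧ b = some g2 ∧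
          g1.target = g2.target ∧ g1.controls.card < g2.controls.card) c' + 1 =
        pairCount (fun a b => ∃ g1 g2, a = some g1 ∧ b = some g2 ∧
          g1.target = g2.target ∧ g1.controls.card < g2.controls.card) c := by
  obtain ⟨pre, post, g1, g2, ht, hc⟩ := h
  refine ⟨by simp [tau, ht], pairCount_append_swap _ _ _ ⟨g1, g2, rfl, rfl, ht, hc⟩ ?_ pre post⟩
  rintro ⟨_, _, ⟨⟩, ⟨⟩, -, hc'⟩
  omega
end

section
/- Every transposition of two basis states differing in a single qubit can be implemented by an MCT circuit: for every n-qubit basis state σ and every qubit t : Fin n, there exists an MCT circuit L on n qubits whose action run L is the permutation that exchanges σ and Function.update σ t (!(σ t)) and fixes every other basis state. -/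
/-- The action of an MCT circuit (a list of MCT gates, applied left to right). -/
def run {n : ℕ} (L : List (MCTGate n)) (σ : Fin n → Bool) : Fin n → Bool :=
  L.foldl (fun s g => g.apply s) σ

def notGate {n : ℕ} (q : Fin n) : MCTGate n := ⟨q, ∅, by simp⟩

lemma notGate_apply {n : ℕ} (q : Fin n) (τ : Fin n → Bool) :
    (notGate q).apply τ = Function.update τ q (!(τ q)) := by
  simp [notGate, MCTGate.apply]

lemma run_cons {n : ℕ} (g : MCTGate n) (L : List (MCTGate n)) (τ : Fin n → Bool) :
    run (g :: L) τ = run L (g.apply τ) := rfl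

lemma run_append {n : ℕ} (L₁ L₂ : List (MCTGate n)) (τ : Fin n → Bool) :
    run (L₁ ++ L₂) τ = run L₂ (run L₁ τ) := by
  simp [run, List.foldl_append]

lemma run_nots {n : ℕ} (l : List (Fin n)) (hl : l.Nodup) (τ : Fin n → Bool) :
    run (l.map notGate) τ = fun i => if i ∈ l then !(τ i) else τ i := by
  induction l generalizing τ with
  | nil => simp [run]
  | cons q l ih =>
    have hq : q ∉ l := (List.nodup_cons.mp hl).1
    rw [List.map_cons, run_cons, notGate_apply, ih (List.nodup_cons.mp hl).2]
    funext i
    by_cases hiq : i = q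
    · subst hiq
      simp [hq, Function.update_self]
    · simp [Function.update_of_ne hiq, hiq]

/-- Conjugating flip: flip all qubits `i ≠ t` where `σ i = false`. -/
def flipF {n : ℕ} (σ : Fin n → Bool) (t : Fin n) (τ : Fin n → Bool) : Fin n → Bool :=
  fun i => if σ i = false ∧ i ≠ t then !(τ i) else τ i

def bigGate {n : ℕ} (t : Fin n) : MCTGate n :=
  ⟨t, Finset.univ.erase t, by simp⟩

lemma flipF_t {n : ℕ} (σ : Fin n → Bool) (t : Fin n) (τ : Fin n → Bool) :
    flipF σ t τ t = τ t := by simp [flipF]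

lemma main_calc {n : ℕ} (σ : Fin n → Bool) (t : Fin n) (τ : Fin n → Bool) :
    flipF σ t ((bigGate t).apply (flipF σ t τ)) =
      Equiv.swap σ (Function.update σ t (!(σ t))) τ := by
  classical
  by_cases hτσ : τ = σ
  · subst hτσ
    have hfire : ∀ c ∈ (bigGate t).controls, flipF τ t τ c = true := by
      intro c hc
      have hct : c ≠ t := (Finset.mem_erase.mp hc).1
      cases hcv : τ c <;> simp [flipF, hct, hcv]
    rw [show (bigGate t).apply (flipF τ t τ)
          = Function.update (flipF τ t τ) t (!(flipF τ t τ t)) from if_pos hfire]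
    rw [Equiv.swap_apply_left]
    funext i
    by_cases hit : i = t
    · subst hit
      simp [flipF, Function.update_self, flipF_t]
    · cases hcv : τ i <;>
        simp [flipF, Function.update_of_ne hit, hit, hcv]
  · by_cases hτσ' : τ = Function.update σ t (!(σ t))
    · have hfire : ∀ c ∈ (bigGate t).controls, flipF σ t τ c = true := by
        intro c hc
        have hct : c ≠ t := (Finset.mem_erase.mp hc).1
        have hτc : τ c = σ c := by rw [hτσ', Function.update_of_ne hct]
        cases hcv : σ c <;> simp [flipF, hct, hcv, hτc]
      rw [show (bigGate t).apply (flipF σ t τ)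
            = Function.update (flipF σ t τ) t (!(flipF σ t τ t)) from if_pos hfire]
      rw [hτσ', Equiv.swap_apply_right]
      funext i
      by_cases hit : i = t
      · subst hit
        simp [flipF, Function.update_self, flipF_t, hτσ']
      · cases hcv : σ i <;>
          simp [flipF, Function.update_of_ne hit, hit, hcv]
    · have hc : ∃ c, c ≠ t ∧ τ c ≠ σ c := by
        by_contra h
        push_neg at h
        by_cases hτt : τ t = σ t
        · apply hτσ
          funext i
          by_cases hit : i = t
          · subst hit; exact hτt
          · exact h i hit
        · apply hτσ'
          funext i
          by_cases hit : i = t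
          · subst hit
            rw [Function.update_self]
            cases hσt : σ i <;> cases hτv : τ i <;> simp_all
          · rw [Function.update_of_ne hit]; exact h i hit
      obtain ⟨c, hct, hcne⟩ := hc
      have hnotfire : ¬ ∀ x ∈ (bigGate t).controls, flipF σ t τ x = true := by
        intro h
        have hcG : c ∈ (bigGate t).controls := by simp [bigGate, hct]
        have hcc := h c hcG
        cases hσc : σ c <;> cases hτc : τ c <;> simp_all [flipF, hct]
      rw [show (bigGate t).apply (flipF σ t τ) = flipF σ t τ from if_neg hnotfire]
      rw [Equiv.swap_apply_of_ne_of_ne hτσ hτσ']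
      funext i
      cases h : σ i <;> by_cases hit : i = t <;> simp [flipF, h, hit]

theorem single_qubit_transposition_realizable {n : ℕ} (σ : Fin n → Bool) (t : Fin n) :
    ∃ L : List (MCTGate n),
      ∀ τ : Fin n → Bool,
        run L τ = Equiv.swap σ (Function.update σ t (!(σ t))) τ := by
  classical
  set S : Finset (Fin n) := Finset.univ.filter (fun c => σ c = false ∧ c ≠ t) with hS
  set l := S.toList with hl
  have hlmem : ∀ i, i ∈ l ↔ σ i = false ∧ i ≠ t := by
    intro i; rw [hl, Finset.mem_toList, hS]; simp
  have hnodup : l.Nodup := Finset.nodup_toList S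
  refine ⟨l.map notGate ++ [bigGate t] ++ l.map notGate, fun τ => ?_⟩
  have hflip : ∀ ρ : Fin n → Bool, run (l.map notGate) ρ = flipF σ t ρ := by
    intro ρ
    rw [run_nots l hnodup]
    funext i
    by_cases hil : i ∈ l
    · simp [flipF, hil, (hlmem i).mp hil]
    · have h2 : ¬(σ i = false ∧ i ≠ t) := (hlmem i).not.mp hil
      simp [flipF, hil, h2]
  rw [run_append, run_append, hflip, show run [bigGate t] = (bigGate t).apply from rfl,
    hflip, main_calc]
end

section
/- Every reversible Boolean function can be represented by an MCT circuit: for every bijection F of the set of n-qubit basis states, there exists an MCT circuit L on n qubits such that run L σ = F σ for every n-qubit basis state σ. -/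
namespace MCTProof

variable {n : ℕ}

def Realizable (F : (Fin n → Bool) → (Fin n → Bool)) : Prop :=
  ∃ L : List (MCTGate n), ∀ σ, run L σ = F σ

lemma run_append (L1 L2 : List (MCTGate n)) (σ : Fin n → Bool) :
    run (L1 ++ L2) σ = run L2 (run L1 σ) := by
  simp [run, List.foldl_append]

lemma realizable_comp {F G : (Fin n → Bool) → (Fin n → Bool)}
    (hF : Realizable F) (hG : Realizable G) : Realizable (G ∘ F) := by
  obtain ⟨L1, h1⟩ := hF
  obtain ⟨L2, h2⟩ := hG
  exact ⟨L1 ++ L2, fun σ => by rw [run_append, h1, h2]; rfl⟩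

lemma realizable_id : Realizable (id : (Fin n → Bool) → (Fin n → Bool)) :=
  ⟨[], fun _ => rfl⟩

/-- X gate. -/
def Xg (t : Fin n) : MCTGate n := ⟨t, ∅, by simp⟩

lemma Xg_apply (t : Fin n) (σ : Fin n → Bool) :
    (Xg t).apply σ = Function.update σ t (!(σ t)) := by
  simp [MCTGate.apply, Xg]

/-- Flip the bits in a list of positions. -/
lemma run_X_list (l : List (Fin n)) (hl : l.Nodup) (σ : Fin n → Bool) :
    run (l.map Xg) σ = fun j => if j ∈ l then !(σ j) else σ j := by
  induction l generalizing σ with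
  | nil => funext j; simp [run]
  | cons a l ih =>
    have ha : a ∉ l := (List.nodup_cons.mp hl).1
    have hl' : l.Nodup := (List.nodup_cons.mp hl).2
    have : run ((a :: l).map Xg) σ = run (l.map Xg) ((Xg a).apply σ) := rfl
    rw [this, ih hl']
    funext j
    rw [Xg_apply]
    by_cases hj : j = a
    · subst hj
      simp [Function.update_self, if_neg ha]
    · simp [Function.update_of_ne hj, List.mem_cons, hj]

def flipS (S : Finset (Fin n)) (σ : Fin n → Bool) : Fin n → Bool :=
  fun j => if j ∈ S then !(σ j) else σ j

lemma run_flip (S : Finset (Fin n)) (σ : Fin n → Bool) :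
    run (S.toList.map Xg) σ = flipS S σ := by
  rw [run_X_list _ S.nodup_toList]
  funext j; simp [flipS, Finset.mem_toList]

/-- Swap of two states differing only at position `t` is realizable. -/
lemma realizable_adj_swap (σ₀ : Fin n → Bool) (t : Fin n) :
    Realizable ⇑(Equiv.swap σ₀ (Function.update σ₀ t (!(σ₀ t)))) := by
  classical
  set τ₀ := Function.update σ₀ t (!(σ₀ t)) with hτ₀
  set S : Finset (Fin n) := (Finset.univ.erase t).filter (fun j => σ₀ j = false) with hS
  have htS : t ∉ S := by simp [hS]
  set G : MCTGate n := ⟨t, Finset.univ.erase t, by simp⟩ with hG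
  refine ⟨S.toList.map Xg ++ [G] ++ S.toList.map Xg, fun σ => ?_⟩
  rw [run_append, run_append, run_flip, run_flip]
  have hrunG : run [G] (flipS S σ) = G.apply (flipS S σ) := rfl
  rw [hrunG]
  -- characterize firing condition
  have hfire : (∀ c ∈ G.controls, flipS S σ c = true) ↔ (∀ j, j ≠ t → σ j = σ₀ j) := by
    constructor
    · intro h j hj
      have := h j (by simp [hG, hj])
      simp only [flipS, hS, Finset.mem_filter, Finset.mem_erase, Finset.mem_univ, and_true,
        true_and] at this
      by_cases h0 : σ₀ j = false
      · rw [if_pos ⟨hj, h0⟩] at this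
        cases hσ : σ j <;> simp [hσ, h0] at this ⊢
      · rw [if_neg (by tauto)] at this
        simp at h0
        rw [this, h0]
    · intro h c hc
      have hct : c ≠ t := (Finset.mem_erase.mp hc).1
      have hcσ := h c hct
      simp only [flipS, hS, Finset.mem_filter, Finset.mem_erase, Finset.mem_univ, and_true,
        true_and]
      by_cases h0 : σ₀ c = false
      · rw [if_pos ⟨hct, h0⟩, hcσ, h0]; rfl
      · rw [if_neg (by tauto), hcσ]
        cases h1 : σ₀ c
        · exact absurd h1 h0
        · rfl
  by_cases hagree : ∀ j, j ≠ t → σ j = σ₀ j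
  · -- gate fires
    have happ : G.apply (flipS S σ) = Function.update (flipS S σ) t (!(flipS S σ t)) := by
      rw [MCTGate.apply, if_pos (hfire.mpr hagree)]
    rw [happ]
    have hval : flipS S (Function.update (flipS S σ) t (!(flipS S σ t)))
        = Function.update σ t (!(σ t)) := by
      funext j
      by_cases hj : j = t
      · subst hj
        simp only [flipS, if_neg htS, Function.update_self]
      · simp only [flipS, Function.update_of_ne hj]
        by_cases hjS : j ∈ S
        · simp [hjS]
        · simp [hjS]
    rw [hval]
    -- σ = σ₀ or σ = τ₀
    by_cases hσt : σ t = σ₀ t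
    · have hσ : σ = σ₀ := by
        funext j; by_cases hj : j = t
        · subst hj; exact hσt
        · exact hagree j hj
      subst hσ
      rw [Equiv.swap_apply_left]
    · have hσ : σ = τ₀ := by
        funext j; by_cases hj : j = t
        · simp only [hj, hτ₀, Function.update_self]
          cases h1 : σ₀ t <;> cases h2 : σ t <;> simp_all
        · rw [hτ₀, Function.update_of_ne hj]; exact hagree j hj
      rw [hσ, Equiv.swap_apply_right]
      funext j
      by_cases hj : j = t
      · subst hj
        rw [hτ₀, Function.update_self, Function.update_self, Bool.not_not]
      · rw [Function.update_of_ne hj, hτ₀, Function.update_of_ne hj]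
  · -- gate does not fire
    have happ : G.apply (flipS S σ) = flipS S σ := by
      rw [MCTGate.apply, if_neg (fun h => hagree (hfire.mp h))]
    rw [happ]
    have hid : flipS S (flipS S σ) = σ := by
      funext j; simp only [flipS]; by_cases hjS : j ∈ S <;> simp [hjS]
    rw [hid]
    have hne1 : σ ≠ σ₀ := by
      intro h; subst h; exact hagree (fun j _ => rfl)
    have hne2 : σ ≠ τ₀ := by
      intro h
      apply hagree
      intro j hj
      rw [h, hτ₀, Function.update_of_ne hj]
    rw [Equiv.swap_apply_of_ne_of_ne hne1 hne2]

/-- Any transposition is realizable, by induction on Hamming distance. -/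
lemma realizable_swap (σ τ : Fin n → Bool) : Realizable ⇑(Equiv.swap σ τ) := by
  classical
  generalize hk : (Finset.univ.filter (fun j => σ j ≠ τ j)).card = k
  induction k using Nat.strong_induction_on generalizing σ τ with
  | _ k ih =>
  by_cases hστ : σ = τ
  · subst hστ
    rw [Equiv.swap_self]
    exact realizable_id
  · have : ∃ t, σ t ≠ τ t := by
      by_contra h
      push_neg at h
      exact hστ (funext h)
    obtain ⟨t, ht⟩ := this
    set σ' := Function.update σ t (!(σ t)) with hσ'
    have hσ't : σ' t = τ t := by
      rw [hσ', Function.update_self]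
      cases h1 : σ t <;> cases h2 : τ t <;> simp_all
    have hadj : Realizable ⇑(Equiv.swap σ σ') := realizable_adj_swap σ t
    by_cases hσ'τ : σ' = τ
    · rw [← hσ'τ]; exact hadj
    · -- card decreases
      have hsub : (Finset.univ.filter (fun j => σ' j ≠ τ j)) ⊂
          (Finset.univ.filter (fun j => σ j ≠ τ j)) := by
        constructor
        · intro j hj
          simp only [Finset.mem_filter, Finset.mem_univ, true_and] at hj ⊢
          by_cases hjt : j = t
          · subst hjt; exact absurd hσ't hj
          · rwa [hσ', Function.update_of_ne hjt] at hj
        · intro hcon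
          have := hcon (Finset.mem_filter.mpr ⟨Finset.mem_univ t, ht⟩)
          simp only [Finset.mem_filter] at this
          exact this.2 hσ't
      have hlt : (Finset.univ.filter (fun j => σ' j ≠ τ j)).card < k := by
        rw [← hk]; exact Finset.card_lt_card hsub
      have hrec : Realizable ⇑(Equiv.swap σ' τ) := ih _ hlt σ' τ rfl
      have hne1 : τ ≠ σ := fun h => hστ h.symm
      have hne2 : τ ≠ σ' := fun h => hσ'τ h.symm
      have key : Equiv.swap σ τ = Equiv.swap σ σ' * Equiv.swap σ' τ * Equiv.swap σ σ' := by
        have := Equiv.swap_apply_apply (Equiv.swap σ σ') σ' τ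
        rw [Equiv.swap_apply_right, Equiv.swap_apply_of_ne_of_ne hne1 hne2] at this
        rw [this]
        simp [Equiv.swap_inv]
      rw [key]
      have : ⇑(Equiv.swap σ σ' * Equiv.swap σ' τ * Equiv.swap σ σ') =
          ⇑(Equiv.swap σ σ') ∘ (⇑(Equiv.swap σ' τ) ∘ ⇑(Equiv.swap σ σ')) := rfl
      rw [this]
      exact realizable_comp (realizable_comp hadj hrec) hadj

end MCTProof

theorem reversible_function_realizable_by_mct_circuit {n : ℕ}
    (F : Equiv.Perm (Fin n → Bool)) :
    ∃ L : List (MCTGate n), ∀ σ : Fin n → Bool, run L σ = F σ := by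
  classical
  have : MCTProof.Realizable ⇑F := by
    refine Equiv.Perm.swap_induction_on F ?_ ?_
    · simpa using MCTProof.realizable_id
    · intro f x y hxy hf
      have : ⇑(Equiv.swap x y * f) = ⇑(Equiv.swap x y) ∘ ⇑f := rfl
      rw [this]
      exact MCTProof.realizable_comp hf (MCTProof.realizable_swap x y)
  exact this
end
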